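/- For a real number k and integers s ≥ 0 and j ≥ 1 with 2j − s − 1 ≥ 0, define d(k,s,j) = ((−1)^s / ((2s−1)!! · (2j−1)!)) · (∏_{r=1}^{s} (j−r)(2k+2r−1)) · (∏_{r=1}^{2j−s−1} (k−j+s+r)), where (2s−1)!! = ∏_{i=1}^{s}(2i−1) (with empty products equal to 1 and (−1)!! = 1). Then for every real k and all integers s ≥ 1 and j with 2j ≥ s + 2, the following identity holds: d(k,s,j) + ((2k+1)·k / (2(4s²−1))) · d(k+1, s−1, j−1) = d(k, s+1, j). -/

import Mathlib

/-- The quantity `d(k, s, j) = ((−1)^s / ((2s−1)!! · (2j−1)!)) ·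
∏_{r=1}^{s} (j−r)(2k+2r−1) · ∏_{r=1}^{2j−s−1} (k−j+s+r)`, where
`(2s−1)!! = ∏_{i=1}^{s}(2i−1)` with `(−1)!! = 1` and empty products equal to `1`. -/
noncomputable def dcoef (k : ℝ) (s j : ℕ) : ℝ :=
  ((-1 : ℝ) ^ s / ((∏ i ∈ Finset.range s, ((2 * i + 1 : ℕ) : ℝ))
      * ((2 * j - 1).factorial : ℝ)))
    * (∏ r ∈ Finset.range s, (((j : ℝ) - ((r : ℝ) + 1)) * (2 * k + 2 * ((r : ℝ) + 1) - 1)))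
    * (∏ r ∈ Finset.range (2 * j - s - 1), (k - (j : ℝ) + (s : ℝ) + ((r : ℝ) + 1)))

/-!
Writing `s = t + 1` and `j = m + 2`, both `d(k, s, j)` and `d(k, s + 1, j)` are explicit rational
multiples of `d(k + 1, s - 1, j - 1)`: the `r`-th factor `(j - r)(2k + 2r - 1)` at `(k, j)` is the
`(r - 1)`-th one at `(k + 1, j - 1)`, and the last product at `(k, s, j)` and `(k + 1, s - 1, j - 1)`
runs over the same interval of integers, the one at `(k, s, j)` having one more factor at its
lower end. The identity then reduces to `k (2j - 1) - (2s + 1)(k - j + s + 1) = (j - s - 1)(2k + 2s + 1)`.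
-/

open Finset

theorem factorial_two_mul_add_three (m : ℕ) :
    ((2 * m + 3).factorial : ℝ) = (2 * m + 3) * (2 * m + 2) * (2 * m + 1).factorial := by
  rw [Nat.factorial_succ, Nat.factorial_succ]
  push_cast
  ring

theorem dcoef_factor_succ_eq (k : ℝ) (m r : ℕ) :
    (((m + 2 : ℕ) : ℝ) - ((r + 1 : ℕ) + 1)) * (2 * k + 2 * ((r + 1 : ℕ) + 1) - 1) =
      (((m + 1 : ℕ) : ℝ) - (r + 1)) * (2 * (k + 1) + 2 * (r + 1) - 1) := by
  push_cast
  ring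

theorem dcoef_succ_add_two {t m : ℕ} (k : ℝ) (htm : t ≤ 2 * m + 1) :
    dcoef k (t + 1) (m + 2) = -((m + 1) * (2 * k + 1) * (k - m + t)) /
      ((2 * t + 1) * (2 * m + 3) * (2 * m + 2)) * dcoef (k + 1) t (m + 1) := by
  have hQ (r : ℕ) : k - ((m + 2 : ℕ) : ℝ) + ((t + 1 : ℕ) : ℝ) + ((r + 1 : ℕ) + 1) =
      k + 1 - ((m + 1 : ℕ) : ℝ) + t + (r + 1) := by
    push_cast
    ring
  unfold dcoef
  rw [show 2 * (m + 2) - (t + 1) - 1 = (2 * (m + 1) - t - 1) + 1 by omega, prod_range_succ, prod_range_succ' _ t, prod_range_succ' _ (2 * (m + 1) - t - 1),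
    show 2 * (m + 2) - 1 = 2 * m + 3 by omega, show 2 * (m + 1) - 1 = 2 * m + 1 by omega,
    factorial_two_mul_add_three]
  simp only [dcoef_factor_succ_eq, hQ]
  have : (2 * (t : ℝ) + 1) ≠ 0 := by positivity
  push_cast
  field_simp
  ring

theorem dcoef_add_two_add_two (k : ℝ) (t m : ℕ) :
    dcoef k (t + 2) (m + 2) = (m + 1) * (2 * k + 1) * (m - t) * (2 * k + 2 * t + 3) /
      ((2 * t + 1) * (2 * t + 3) * (2 * m + 3) * (2 * m + 2)) * dcoef (k + 1) t (m + 1) := by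
  have hQ (r : ℕ) : k - ((m + 2 : ℕ) : ℝ) + ((t + 2 : ℕ) : ℝ) + (r + 1) =
      k + 1 - ((m + 1 : ℕ) : ℝ) + t + (r + 1) := by
    push_cast
    ring
  unfold dcoef
  rw [show 2 * (m + 2) - (t + 2) - 1 = 2 * (m + 1) - t - 1 by omega, prod_range_succ,
    prod_range_succ, prod_range_succ, prod_range_succ' _ t,
    show 2 * (m + 2) - 1 = 2 * m + 3 by omega, show 2 * (m + 1) - 1 = 2 * m + 1 by omega,
    factorial_two_mul_add_three]
  simp only [dcoef_factor_succ_eq, hQ]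
  have : (2 * (t : ℝ) + 1) ≠ 0 := by positivity
  push_cast
  field_simp
  ring

theorem stmt_13 (k : ℝ) (s j : ℕ) (hs : 1 ≤ s) (hj : s + 2 ≤ 2 * j) :
    dcoef k s j + ((2 * k + 1) * k / (2 * (4 * (s : ℝ) ^ 2 - 1))) * dcoef (k + 1) (s - 1) (j - 1)
      = dcoef k (s + 1) j := by
  obtain ⟨t, rfl⟩ : ∃ t, s = t + 1 := ⟨s - 1, by omega⟩
  obtain ⟨m, rfl⟩ : ∃ m, j = m + 2 := ⟨j - 2, by omega⟩
  rw [dcoef_succ_add_two k (by omega), dcoef_add_two_add_two, Nat.add_sub_cancel,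
    show m + 2 - 1 = m + 1 by omega]
  have h4s : 4 * ((t + 1 : ℕ) : ℝ) ^ 2 - 1 = (2 * t + 1) * (2 * t + 3) := by
    push_cast
    ring
  rw [h4s]
  field_simp
  ring
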